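/- (High-SNR sum-capacity expression; mathematical content of Corollaries 2 and 4) Let K ≥ 1 and let H₁,…,H_K be proper real matrices, where H_k has size M×N_k (all with M rows). For P > 0 let C(H_k, P) be the supremum of (1/2) · log det(I_M + H_k * Q * H_kᵀ) over all N_k×N_k real positive-semidefinite matrices Q with trace Q ≤ P. Then for every ε > 0 there exists P₀ > 0 such that for all P₁,…,P_K with min_k P_k ≥ P₀, | min_{k=1,…,K} C(H_k, P_k) − (M/2) · log( (min_{k=1,…,K} P_k) / M ) | ≤ ε. -/

import Mathlib

open Matrix

/-- The Gaussian MIMO capacity `C(H, P)`: the supremum of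
`(1/2) · log det (I + H * Q * Hᵀ)` over all positive-semidefinite input
covariance matrices `Q` with `trace Q ≤ P`. -/
noncomputable def mimoCapacity (M N : ℕ) (H : Matrix (Fin M) (Fin N) ℝ) (P : ℝ) : ℝ :=
  sSup {r : ℝ | ∃ Q : Matrix (Fin N) (Fin N) ℝ, Q.PosSemidef ∧ Q.trace ≤ P ∧
    r = (1 / 2 : ℝ) * Real.log ((1 + H * Q * Hᵀ).det)}

/-!
For each `H = H_k` put `G = H Hᵀ`, so `det G = 1`, and let `Π = Hᵀ G⁻¹ H` be the orthogonal
projection onto the row space of `H`. The input `(p / M) Π` has trace `p` and turns `H Q Hᵀ` into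
`(p / M) G`, so `C(H, P) ≥ (M / 2) log (p / M)` whenever `p ≤ P`. Conversely
`det (I + H Q Hᵀ) = det (G⁻¹ (I + H Q Hᵀ))`, and `G⁻¹ (I + H Q Hᵀ)` is similar to a positive
semidefinite matrix of trace `tr G⁻¹ + tr (Π Q) ≤ tr G⁻¹ + P`; AM–GM on its eigenvalues gives
`C(H, P) ≤ (M / 2) log ((tr G⁻¹ + P) / M) ≤ (M / 2) log (P / M) + M tr G⁻¹ / (2 P)`.
The minimum over `k` is squeezed between the lower bound at `p = min_k P_k` and the upper bound
at an index attaining that minimum.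
-/

namespace Matrix

section PosSemidef

variable {n : Type*} [Fintype n] [DecidableEq n] {A X : Matrix n n ℝ}

theorem PosSemidef.det_le_trace_div_card_pow (hA : A.PosSemidef) :
    A.det ≤ (A.trace / Fintype.card n) ^ Fintype.card n := by
  rcases isEmpty_or_nonempty n with hn | hn
  · simp
  set ev := hA.1.eigenvalues
  have hev : ∀ i, 0 ≤ ev i := hA.eigenvalues_nonneg
  have hcard : (0 : ℝ) < Fintype.card n := by exact_mod_cast Fintype.card_pos
  have amgm := Real.geom_mean_le_arith_mean Finset.univ (fun _ => 1) ev
    (fun _ _ => zero_le_one) (by simpa using hcard) (fun i _ => hev i)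
  simp only [Real.rpow_one, one_mul, Finset.sum_const, Finset.card_univ, nsmul_eq_mul,
    mul_one] at amgm
  have hprod : 0 ≤ ∏ i, ev i := Finset.prod_nonneg fun i _ => hev i
  rw [hA.1.det_eq_prod_eigenvalues, hA.1.trace_eq_sum_eigenvalues]
  simp only [RCLike.ofReal_real_eq_id, id]
  calc ∏ i, ev i = ((∏ i, ev i) ^ ((Fintype.card n : ℝ)⁻¹)) ^ Fintype.card n :=
        (Real.rpow_inv_natCast_pow hprod Fintype.card_ne_zero).symm
    _ ≤ _ := pow_le_pow_left₀ (Real.rpow_nonneg hprod _) amgm _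

theorem PosSemidef.det_mul_le_div_card_pow (hA : A.PosSemidef) (hX : X.PosSemidef) {c : ℝ}
    (hc : (A * X).trace ≤ c) : (A * X).det ≤ (c / Fintype.card n) ^ Fintype.card n := by
  open scoped MatrixOrder in
  obtain ⟨B, rfl⟩ := CStarAlgebra.nonneg_iff_eq_star_mul_self.mp hA.nonneg
  have hC : (B * X * Bᴴ).PosSemidef := hX.mul_mul_conjTranspose_same B
  have hdet : (star B * B * X).det = (B * X * Bᴴ).det := by
    simp only [det_mul, star_eq_conjTranspose]
    ring
  have htrace : (star B * B * X).trace = (B * X * Bᴴ).trace := by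
    rw [Matrix.mul_assoc, trace_mul_comm, star_eq_conjTranspose]
  rw [htrace] at hc
  rw [hdet]
  exact hC.det_le_trace_div_card_pow.trans
    (pow_le_pow_left₀ (div_nonneg hC.trace_nonneg (Nat.cast_nonneg _)) (by gcongr) _)

theorem IsHermitian.det_one_add (hA : A.IsHermitian) :
    (1 + A).det = ∏ i, (1 + hA.eigenvalues i) := by
  set U := hA.eigenvectorUnitary
  conv_lhs =>
    rw [hA.spectral_theorem, ← map_one (Unitary.conjStarAlgAut ℝ _ U), ← map_add,
      Unitary.conjStarAlgAut_apply]
  rw [det_mul, det_mul, mul_comm, ← mul_assoc, ← det_mul, Unitary.star_mul_self_of_mem U.2,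
    ← diagonal_one, diagonal_add, det_diagonal]
  simp

theorem PosSemidef.det_le_det_one_add (hA : A.PosSemidef) : A.det ≤ (1 + A).det := by
  rw [hA.1.det_one_add, hA.1.det_eq_prod_eigenvalues]
  exact Finset.prod_le_prod (fun i _ => hA.eigenvalues_nonneg i) fun i _ => by simp

theorem PosSemidef.trace_mul_le_trace_of_isIdempotentElem {R : Type*} [CommRing R]
    [PartialOrder R] [StarRing R] [IsOrderedAddMonoid R] {E Q : Matrix n n R} (hQ : Q.PosSemidef)
    (hE : Eᴴ = E) (hEE : IsIdempotentElem E) : (E * Q).trace ≤ Q.trace := by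
  have hF : (1 - E) * (1 - E) = 1 - E := hEE.one_sub.eq
  have hcongr : ((1 - E) * Q).trace = ((1 - E) * Q * (1 - E)ᴴ).trace := by
    rw [conjTranspose_sub, conjTranspose_one, hE, trace_mul_cycle, hF]
  have hnonneg := (hQ.mul_mul_conjTranspose_same (1 - E)).trace_nonneg
  rw [← hcongr, sub_mul, one_mul, trace_sub] at hnonneg
  exact sub_nonneg.mp hnonneg

end PosSemidef

section rowProj

variable {m n : Type*} [Fintype m] [Fintype n] (H : Matrix m n ℝ)

theorem posSemidef_mul_transpose_self : (H * Hᵀ).PosSemidef := by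
  simpa using posSemidef_self_mul_conjTranspose H

variable [DecidableEq m]

noncomputable def rowProj : Matrix n n ℝ := Hᵀ * (H * Hᵀ)⁻¹ * H

theorem posSemidef_rowProj : (rowProj H).PosSemidef := by
  simpa [rowProj] using (posSemidef_mul_transpose_self H).inv.mul_mul_conjTranspose_same Hᵀ

variable {H}

theorem mul_rowProj (hH : IsUnit (H * Hᵀ).det) : H * rowProj H = H := by
  rw [rowProj, ← Matrix.mul_assoc, ← Matrix.mul_assoc, mul_nonsing_inv _ hH, Matrix.one_mul]

theorem isIdempotentElem_rowProj (hH : IsUnit (H * Hᵀ).det) : IsIdempotentElem (rowProj H) := by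
  change Hᵀ * (H * Hᵀ)⁻¹ * H * rowProj H = rowProj H
  rw [Matrix.mul_assoc, mul_rowProj hH, rowProj]

theorem trace_rowProj (hH : IsUnit (H * Hᵀ).det) : (rowProj H).trace = Fintype.card m := by
  rw [rowProj, trace_mul_cycle, mul_nonsing_inv _ hH, trace_one]

end rowProj

end Matrix

theorem Real.log_add_div_le {x : ℝ} (hx : 0 < x) {t : ℝ} (ht : 0 ≤ t) (c : ℝ) :
    Real.log ((t + x) / c) ≤ Real.log (x / c) + t / x := by
  rcases eq_or_ne c 0 with rfl | hc
  · simp only [div_zero, Real.log_zero, zero_add]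
    positivity
  have h := Real.log_le_sub_one_of_pos (show 0 < (t + x) / x by positivity)
  rw [Real.log_div (by positivity) hx.ne', add_div, div_self hx.ne'] at h
  rw [Real.log_div (by positivity) hc, Real.log_div hx.ne' hc]
  linarith

section capacity

open Real

variable {M N : ℕ} {H : Matrix (Fin M) (Fin N) ℝ} {P : ℝ}

noncomputable def mimoRate (H : Matrix (Fin M) (Fin N) ℝ) (Q : Matrix (Fin N) (Fin N) ℝ) :
    ℝ :=
  1 / 2 * log (1 + H * Q * Hᵀ).det

theorem mimoCapacity_le {c : ℝ} (hP : 0 ≤ P)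
    (h : ∀ Q, Q.PosSemidef → Q.trace ≤ P → mimoRate H Q ≤ c) : mimoCapacity M N H P ≤ c :=
  csSup_le ⟨_, 0, .zero, by simpa using hP, rfl⟩ fun _ ⟨Q, hQ, hQP, hr⟩ => hr ▸ h Q hQ hQP

theorem mimoRate_le_mimoCapacity {c : ℝ}
    (h : ∀ Q, Q.PosSemidef → Q.trace ≤ P → mimoRate H Q ≤ c) {Q : Matrix (Fin N) (Fin N) ℝ}
    (hQ : Q.PosSemidef) (hQP : Q.trace ≤ P) :
    mimoRate H Q ≤ mimoCapacity M N H P :=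
  le_csSup ⟨c, fun _ ⟨Q, hQ, hQP, hr⟩ => hr ▸ h Q hQ hQP⟩ ⟨Q, hQ, hQP, rfl⟩

theorem mimoRate_le_of_det_eq_one (hH : (H * Hᵀ).det = 1) {Q : Matrix (Fin N) (Fin N) ℝ}
    (hQ : Q.PosSemidef) (hQP : Q.trace ≤ P) :
    mimoRate H Q ≤ M / 2 * log (((H * Hᵀ)⁻¹.trace + P) / M) := by
  set G := H * Hᵀ with hG
  have hS : (H * Q * Hᵀ).PosSemidef := by
    simpa using hQ.mul_mul_conjTranspose_same H
  have hdet : (1 + H * Q * Hᵀ).det = (G⁻¹ * (1 + H * Q * Hᵀ)).det := by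
    simp [det_nonsing_inv, hH]
  have hprojection : (G⁻¹ * (H * Q * Hᵀ)).trace = (rowProj H * Q).trace := by
    rw [rowProj, ← hG, ← Matrix.mul_assoc, ← Matrix.mul_assoc, trace_mul_comm]
    simp only [Matrix.mul_assoc]
  have htrace : (G⁻¹ * (1 + H * Q * Hᵀ)).trace ≤ G⁻¹.trace + P := by
    rw [Matrix.mul_add, Matrix.mul_one, trace_add, hprojection]
    gcongr
    exact hQP.trans' (hQ.trace_mul_le_trace_of_isIdempotentElem (posSemidef_rowProj H).1
      (isIdempotentElem_rowProj (hH ▸ isUnit_one)))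
  have hpos : 0 < (1 + H * Q * Hᵀ).det := (PosDef.one.add_posSemidef hS).det_pos
  have hbound : (1 + H * Q * Hᵀ).det ≤ ((G⁻¹.trace + P) / M) ^ M := by
    rw [hdet]
    simpa using (posSemidef_mul_transpose_self H).inv.det_mul_le_div_card_pow
      (PosSemidef.one.add hS) htrace
  calc mimoRate H Q ≤ 1 / 2 * log (((G⁻¹.trace + P) / M) ^ M) := by
        unfold mimoRate
        gcongr
    _ = M / 2 * log ((G⁻¹.trace + P) / M) := by
        rw [log_pow]
        ring

theorem le_mimoRate_rowProj (hH : (H * Hᵀ).det = 1) {p : ℝ} (hp : 0 < p) :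
    M / 2 * log (p / M) ≤ mimoRate H ((p / M) • rowProj H) := by
  have hHQH : H * ((p / M) • rowProj H) * Hᵀ = (p / M) • (H * Hᵀ) := by
    rw [Matrix.mul_smul, mul_rowProj (hH ▸ isUnit_one), Matrix.smul_mul]
  have hpos : 0 < (p / M) ^ M := by
    rcases M.eq_zero_or_pos with rfl | hM
    · simp
    · positivity
  have hdet : (p / M) ^ M ≤ (1 + H * ((p / M) • rowProj H) * Hᵀ).det := by
    rw [hHQH]
    simpa [det_smul, hH] using
      ((posSemidef_mul_transpose_self H).smul (by positivity : 0 ≤ p / M)).det_le_det_one_add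
  calc M / 2 * log (p / M) = 1 / 2 * log ((p / M) ^ M) := by
        rw [log_pow]
        ring
    _ ≤ mimoRate H ((p / M) • rowProj H) := by
        unfold mimoRate
        gcongr

theorem le_mimoCapacity_of_det_eq_one (hH : (H * Hᵀ).det = 1) {p : ℝ} (hp : 0 < p)
    (hpP : p ≤ P) : M / 2 * log (p / M) ≤ mimoCapacity M N H P := by
  refine (le_mimoRate_rowProj hH hp).trans (mimoRate_le_mimoCapacity
    (fun _ hQ hQP => mimoRate_le_of_det_eq_one hH hQ hQP)
    ((posSemidef_rowProj H).smul (by positivity)) ?_)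
  rw [trace_smul, trace_rowProj (hH ▸ isUnit_one), smul_eq_mul, Fintype.card_fin]
  rcases M.eq_zero_or_pos with rfl | hM
  · simpa using hp.le.trans hpP
  · rwa [div_mul_cancel₀ _ (by positivity)]

theorem mimoCapacity_le_add_of_det_eq_one (hH : (H * Hᵀ).det = 1) (hP : 0 < P) :
    mimoCapacity M N H P ≤ M / 2 * log (P / M) + M / 2 * ((H * Hᵀ)⁻¹.trace / P) := by
  refine mimoCapacity_le hP.le fun _ hQ hQP => (mimoRate_le_of_det_eq_one hH hQ hQP).trans ?_
  rw [← mul_add]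
  gcongr
  exact log_add_div_le hP (posSemidef_mul_transpose_self H).inv.trace_nonneg _

end capacity

theorem min_capacity_high_snr_general
    (K : ℕ) (M : ℕ) (Nt : Fin K → ℕ)
    (H : ∀ k : Fin K, Matrix (Fin M) (Fin (Nt k)) ℝ)
    (hdet : ∀ k, (H k * (H k)ᵀ).det = 1) :
    ∀ ε > (0 : ℝ), ∃ P₀ > (0 : ℝ), ∀ P : Fin K → ℝ,
      P₀ ≤ (⨅ k, P k) →
      |(⨅ k, mimoCapacity M (Nt k) (H k) (P k))
          - (M / 2 : ℝ) * Real.log ((⨅ k, P k) / M)| ≤ ε := by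
  intro ε hε
  rcases isEmpty_or_nonempty (Fin K) with hK | hK
  · exact ⟨1, one_pos, fun P hP => absurd hP (by simp)⟩
  set t := fun k => ((H k * (H k)ᵀ)⁻¹).trace
  have ht : ∀ k, 0 ≤ t k := fun k => (posSemidef_mul_transpose_self (H k)).inv.trace_nonneg
  set T := ∑ k, t k
  have hT : 0 ≤ T := Finset.sum_nonneg fun k _ => ht k
  refine ⟨(M / 2 * T + 1) / ε, by positivity, fun P hP => ?_⟩
  set p := ⨅ k, P k
  have hp : 0 < p := lt_of_lt_of_le (by positivity) hP
  have hpε : M / 2 * T + 1 ≤ p * ε := (div_le_iff₀ hε).mp hP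
  obtain ⟨j, hj⟩ : ∃ j, P j = p := exists_eq_ciInf_of_finite
  have hlower : M / 2 * Real.log (p / M) ≤ ⨅ k, mimoCapacity M (Nt k) (H k) (P k) :=
    le_ciInf fun k =>
      le_mimoCapacity_of_det_eq_one (hdet k) hp (ciInf_le (Finite.bddBelow_range P) k)
  have hupper : ⨅ k, mimoCapacity M (Nt k) (H k) (P k) ≤
      M / 2 * Real.log (p / M) + M / 2 * (t j / p) :=
    (ciInf_le (Finite.bddBelow_range _) j).trans <| by
      rw [← hj]
      exact mimoCapacity_le_add_of_det_eq_one (hdet j) (by rwa [hj])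
  have hsmall : M / 2 * (t j / p) ≤ ε := by
    have htT : M / 2 * t j ≤ M / 2 * T := by
      gcongr
      exact Finset.single_le_sum (fun k _ => ht k) (Finset.mem_univ j)
    rw [← mul_div_assoc, div_le_iff₀ hp]
    linarith
  rw [abs_le]
  constructor <;> linarith

/-- **High-SNR sum-capacity expression; Corollaries 2 and 4.**
For proper matrices `H₁, …, H_K` (each of size `M × N_k`), the minimum of the
individual capacities `C(H_k, P_k)` is within `ε` of
`(M/2) · log ((min_k P_k) / M)` whenever `min_k P_k` is large enough. -/
theorem min_capacity_high_snr
    (K : ℕ) (hK : 1 ≤ K) (M : ℕ) (Nt : Fin K → ℕ)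
    (H : ∀ k : Fin K, Matrix (Fin M) (Fin (Nt k)) ℝ)
    (hle : ∀ k, M ≤ Nt k) (hrank : ∀ k, (H k).rank = M)
    (hdet : ∀ k, (H k * (H k)ᵀ).det = 1) :
    ∀ ε > (0 : ℝ), ∃ P₀ > (0 : ℝ), ∀ P : Fin K → ℝ,
      P₀ ≤ (⨅ k, P k) →
      |(⨅ k, mimoCapacity M (Nt k) (H k) (P k))
          - (M / 2 : ℝ) * Real.log ((⨅ k, P k) / M)| ≤ ε :=
  min_capacity_high_snr_general K M Nt H hdet
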